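/- arXiv:2205.15344 — 4 statements merged into one kernel-verified Lean document; each statement's English description precedes it below -/
import Mathlib

section
/- In the derived category of dg modules over the dg algebra S = ℂ[y] with y in degree −1 and zero differential, the homotopy colimit E_n of the direct system X_0(n) →(y) X_1(n−1) →(y) X_2(n−2) → ⋯, where X_i = ℂ[y]/(y^{i+1}), is isomorphic to the dg module ℂ[y^{−1}](n). -/
noncomputable section

open scoped Classical DirectSum

/-!  We model dg modules over the dg algebra `S = ℂ[y]` (`y` in cohomological degree `-1`,
zero differential) degreewise.  All dg modules appearing here have zero differential, so a
dg module is a family of `ℂ`-vector spaces `(C m)_{m ∈ ℤ}` together with degree `-1`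
operators (the action of `y`).

* `X_i = ℂ[y]/(y^{i+1})` shifted by `(n - i)` has degree-`m` component spanned by
  `y^{i-n-m}`, i.e. it is `ℂ` exactly when `-n ≤ m ≤ i - n`; we record this component as
  the submodule `S13 n i m ⊆ ℂ` (so the coordinate is the coefficient of the monomial).
* `ℂ[y⁻¹](n)` has degree-`m` component spanned by `y^{-(n+m)}`, i.e. `ℂ` exactly when
  `-n ≤ m`; recorded as `T13 n m ⊆ ℂ`.
-/

/-- Degree-`m` component of `X_i(n-i) = (ℂ[y]/(y^{i+1}))(n-i)`. -/
def S13 (n : ℤ) (i : ℕ) (m : ℤ) : Submodule ℂ ℂ :=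
  if -n ≤ m ∧ m ≤ (i : ℤ) - n then ⊤ else ⊥

/-- Degree-`m` component of `ℂ[y⁻¹](n)`. -/
def T13 (n m : ℤ) : Submodule ℂ ℂ :=
  if -n ≤ m then ⊤ else ⊥

/-- The action of `y` on `X_i(n-i)`, from degree `m` to degree `m-1`. -/
def yS (n : ℤ) (i : ℕ) (m : ℤ) : ↥(S13 n i m) →ₗ[ℂ] ↥(S13 n i (m - 1)) :=
  if h : S13 n i m ≤ S13 n i (m - 1) then Submodule.inclusion h else 0

/-- The action of `y` on `ℂ[y⁻¹](n)`, from degree `m` to degree `m-1`. -/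
def yT (n m : ℤ) : ↥(T13 n m) →ₗ[ℂ] ↥(T13 n (m - 1)) :=
  if h : T13 n m ≤ T13 n (m - 1) then Submodule.inclusion h else 0

lemma S13_mono (n : ℤ) (i : ℕ) (m : ℤ) : S13 n i m ≤ S13 n (i + 1) m := by
  unfold S13
  split_ifs with h1 h2
  · exact le_rfl
  · exfalso; push_cast at h2 ⊢; omega
  · exact bot_le
  · exact le_rfl

lemma S13_le_T13 (n : ℤ) (i : ℕ) (m : ℤ) : S13 n i m ≤ T13 n m := by
  unfold S13 T13
  split_ifs with h1 h2
  · exact le_rfl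
  · exact absurd h1.1 h2
  · exact bot_le
  · exact bot_le

/-- The degree-`m` component of the coproduct (direct sum) `⊕_{i ∈ ℕ} X_i(n-i)` of dg
`S`-modules. -/
abbrev Prod13 (n m : ℤ) := ⨁ i : ℕ, ↥(S13 n i m)

/-- The `y`-action on `⊕_{i ∈ ℕ} X_i(n-i)`, in degree `m`. -/
def yProd (n m : ℤ) : Prod13 n m →ₗ[ℂ] Prod13 n (m - 1) :=
  DFinsupp.mapRange.linearMap (fun i => yS n i m)

/-- The shift map on `⊕_{i ∈ ℕ} X_i(n-i)` whose `i`-th component is the structure map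
"multiplication by `y`" `X_i(n-i) → X_{i+1}(n-i-1)` of the direct system (which is the
coordinatewise inclusion), in degree `m`. -/
def shift13 (n m : ℤ) : Prod13 n m →ₗ[ℂ] Prod13 n m :=
  DirectSum.toModule ℂ ℕ (Prod13 n m)
    (fun i => (DirectSum.lof ℂ ℕ (fun i' => ↥(S13 n i' m)) (i + 1)) ∘ₗ
      Submodule.inclusion (S13_mono n i m))

/-- The map `1 - (shift)` on `⊕_{i ∈ ℕ} X_i(n-i)`, in degree `m`; the homotopy colimit
`E_n` of the direct system `X_0(n) →y X_1(n-1) →y X_2(n-2) → ⋯` is by definition the cone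
of this map in the derived category of dg `S`-modules. -/
def oneMinusShift (n m : ℤ) : Prod13 n m →ₗ[ℂ] Prod13 n m :=
  LinearMap.id - shift13 n m

/-! The cokernel of `1 - shift` on `⨁ᵢ Xᵢ(n-i)` is the direct limit of the chain of inclusions
`X₀(n) ⊆ X₁(n-1) ⊆ ⋯` inside `ℂ[y⁻¹](n)`, i.e. their union, which is all of `ℂ[y⁻¹](n)`.
Modulo the range of `1 - shift` every element is congruent to a single term `lof k v` (push
all terms up to a common index `k`), and summing coordinates recovers `v`; so an element with
coordinate sum zero lies in the range. A fixed point of the shift vanishes coordinate by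
coordinate, starting from index `0`. -/

namespace DirectSum

section Chain

variable {R M : Type*} [Ring R] [AddCommGroup M] [Module R M]
  {p : ℕ → Submodule R M} (hp : ∀ i, p i ≤ p (i + 1))

def shiftOfLE : (⨁ i, p i) →ₗ[R] ⨁ i, p i :=
  toModule R ℕ _ fun i => lof R ℕ (fun i => p i) (i + 1) ∘ₗ Submodule.inclusion (hp i)

theorem shiftOfLE_lof (i : ℕ) (v : p i) :
    shiftOfLE hp (lof R ℕ (fun i => p i) i v) =
      lof R ℕ (fun i => p i) (i + 1) (Submodule.inclusion (hp i) v) := by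
  rw [shiftOfLE, toModule_lof, LinearMap.comp_apply]

theorem shiftOfLE_apply_zero (x : ⨁ i, p i) : shiftOfLE hp x 0 = 0 := by
  induction x using DirectSum.induction_on with
  | zero => simp
  | of i v => rw [← lof_eq_of R, shiftOfLE_lof, lof_eq_of, of_eq_of_ne _ _ _ (by omega)]
  | add x y hx hy => rw [map_add, add_apply, hx, hy, add_zero]

theorem shiftOfLE_apply_succ (x : ⨁ i, p i) (j : ℕ) :
    shiftOfLE hp x (j + 1) = Submodule.inclusion (hp j) (x j) := by
  induction x using DirectSum.induction_on with
  | zero => simp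
  | of i v =>
    rw [← lof_eq_of R, shiftOfLE_lof]
    rcases eq_or_ne i j with rfl | hij
    · simp only [lof_apply]
    · rw [lof_eq_of, lof_eq_of, of_eq_of_ne _ _ _ (by omega), of_eq_of_ne _ _ _ (Ne.symm hij),
        map_zero]
  | add x y hx hy => rw [map_add, add_apply, add_apply, hx, hy, map_add]

theorem injective_id_sub_shiftOfLE :
    Function.Injective (LinearMap.id - shiftOfLE hp : Module.End R (⨁ i, p i)) := by
  rw [← LinearMap.ker_eq_bot, LinearMap.ker_eq_bot']
  intro x hx
  have hfix : x = shiftOfLE hp x := sub_eq_zero.1 hx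
  ext1 j
  induction j with
  | zero => rw [hfix, shiftOfLE_apply_zero, zero_apply]
  | succ j ih => rw [hfix, shiftOfLE_apply_succ, ih, zero_apply, map_zero, zero_apply]

theorem lof_sub_lof_mem_range_id_sub_shiftOfLE {i j : ℕ} (hij : i ≤ j) (v : M) (hi : v ∈ p i)
    (hj : v ∈ p j) :
    lof R ℕ (fun i => p i) i ⟨v, hi⟩ - lof R ℕ (fun i => p i) j ⟨v, hj⟩ ∈
      LinearMap.range (LinearMap.id - shiftOfLE hp : Module.End R (⨁ i, p i)) := by
  induction j, hij using Nat.le_induction with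
  | base => simp
  | succ j hij ih =>
    have hj' : v ∈ p j := monotone_nat_of_le_succ hp hij hi
    have hstep :
        lof R ℕ (fun i => p i) j ⟨v, hj'⟩ - lof R ℕ (fun i => p i) (j + 1) ⟨v, hj⟩ =
        (LinearMap.id - shiftOfLE hp : Module.End R (⨁ i, p i))
          (lof R ℕ (fun i => p i) j ⟨v, hj'⟩) := by
      rw [LinearMap.sub_apply, shiftOfLE_lof]; rfl
    have := add_mem (ih hj') (hstep ▸ LinearMap.mem_range_self _ _)
    rwa [sub_add_sub_cancel] at this

theorem exists_sub_lof_mem_range_id_sub_shiftOfLE (x : ⨁ i, p i) :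
    ∃ k, ∃ v : p k, x - lof R ℕ (fun i => p i) k v ∈
      LinearMap.range (LinearMap.id - shiftOfLE hp : Module.End R (⨁ i, p i)) := by
  induction x using DirectSum.induction_on with
  | zero => exact ⟨0, 0, by simp⟩
  | of i v => exact ⟨i, v, by simp [lof_eq_of]⟩
  | add x y hx hy =>
    obtain ⟨a, v, hv⟩ := hx
    obtain ⟨b, w, hw⟩ := hy
    have hmono := monotone_nat_of_le_succ hp
    set k := max a b
    have hvk : (v : M) ∈ p k := hmono (le_max_left a b) v.2
    have hwk : (w : M) ∈ p k := hmono (le_max_right a b) w.2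
    refine ⟨k, ⟨v, hvk⟩ + ⟨w, hwk⟩, ?_⟩
    have hsplit : x + y - lof R ℕ (fun i => p i) k (⟨v, hvk⟩ + ⟨w, hwk⟩) =
        (x - lof R ℕ _ a v) + (y - lof R ℕ _ b w) +
          (lof R ℕ (fun i => p i) a ⟨v, v.2⟩ - lof R ℕ (fun i => p i) k ⟨v, hvk⟩) +
          (lof R ℕ (fun i => p i) b ⟨w, w.2⟩ - lof R ℕ (fun i => p i) k ⟨w, hwk⟩) := by
      rw [map_add]; abel
    rw [hsplit]
    exact add_mem (add_mem (add_mem hv hw)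
      (lof_sub_lof_mem_range_id_sub_shiftOfLE hp (le_max_left a b) _ _ _))
      (lof_sub_lof_mem_range_id_sub_shiftOfLE hp (le_max_right a b) _ _ _)

variable {N : Submodule R M} (hN : ∀ i, p i ≤ N)

def sumOfLE : (⨁ i, p i) →ₗ[R] N :=
  toModule R ℕ N fun i => Submodule.inclusion (hN i)

theorem sumOfLE_lof (i : ℕ) (v : p i) :
    sumOfLE hN (lof R ℕ (fun i => p i) i v) = Submodule.inclusion (hN i) v := by
  rw [sumOfLE, toModule_lof]

theorem sumOfLE_comp_id_sub_shiftOfLE :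
    sumOfLE hN ∘ₗ (LinearMap.id - shiftOfLE hp : Module.End R (⨁ i, p i)) = 0 := by
  refine linearMap_ext R fun i => LinearMap.ext fun v => ?_
  simp only [LinearMap.comp_apply, LinearMap.sub_apply, LinearMap.id_apply, map_sub,
    shiftOfLE_lof, sumOfLE_lof, LinearMap.zero_apply]
  exact sub_self _

theorem range_id_sub_shiftOfLE :
    LinearMap.range (LinearMap.id - shiftOfLE hp : Module.End R (⨁ i, p i)) =
      LinearMap.ker (sumOfLE hN) := by
  refine le_antisymm ?_ fun x hx => ?_
  · rintro _ ⟨x, rfl⟩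
    exact LinearMap.congr_fun (sumOfLE_comp_id_sub_shiftOfLE hp hN) x
  obtain ⟨k, v, hv⟩ := exists_sub_lof_mem_range_id_sub_shiftOfLE hp x
  have hv0 : v = 0 := by
    have := LinearMap.range_le_ker_iff.2 (sumOfLE_comp_id_sub_shiftOfLE hp hN) hv
    rw [LinearMap.mem_ker, map_sub, hx, zero_sub, neg_eq_zero, sumOfLE_lof] at this
    exact Submodule.inclusion_injective _ (this.trans (map_zero _).symm)
  simpa [hv0] using hv

theorem sumOfLE_surjective (hcover : ∀ v ∈ N, ∃ i, v ∈ p i) :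
    Function.Surjective (sumOfLE hN) := by
  rintro ⟨v, hv⟩
  obtain ⟨i, hi⟩ := hcover v hv
  exact ⟨lof R ℕ (fun i => p i) i ⟨v, hi⟩, by rw [sumOfLE_lof]; rfl⟩

end Chain

section Naturality

variable {R M M' : Type*} [Ring R] [AddCommGroup M] [Module R M] [AddCommGroup M'] [Module R M']
  {p : ℕ → Submodule R M} {p' : ℕ → Submodule R M'} (f : ∀ i, p i →ₗ[R] p' i)

theorem mapRange_lof (i : ℕ) (v : p i) :
    DFinsupp.mapRange.linearMap f (lof R ℕ (fun i => p i) i v) =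
      lof R ℕ (fun i => p' i) i (f i v) :=
  DFinsupp.mapRange_single (hf := fun i => map_zero (f i))

theorem mapRange_comp_shiftOfLE (hp : ∀ i, p i ≤ p (i + 1)) (hp' : ∀ i, p' i ≤ p' (i + 1))
    (hf : ∀ i (v : p i), (f (i + 1) (Submodule.inclusion (hp i) v) : M') = f i v) :
    DFinsupp.mapRange.linearMap f ∘ₗ shiftOfLE hp =
      shiftOfLE hp' ∘ₗ DFinsupp.mapRange.linearMap f := by
  refine linearMap_ext R fun i => LinearMap.ext fun v => ?_
  simp only [LinearMap.comp_apply]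
  rw [shiftOfLE_lof, mapRange_lof, mapRange_lof, shiftOfLE_lof]
  exact congrArg _ (Subtype.ext (hf i v))

theorem mapRange_comp_id_sub_shiftOfLE (hp : ∀ i, p i ≤ p (i + 1))
    (hp' : ∀ i, p' i ≤ p' (i + 1))
    (hf : ∀ i (v : p i), (f (i + 1) (Submodule.inclusion (hp i) v) : M') = f i v) :
    DFinsupp.mapRange.linearMap f ∘ₗ (LinearMap.id - shiftOfLE hp : Module.End R (⨁ i, p i)) =
      (LinearMap.id - shiftOfLE hp' : Module.End R (⨁ i, p' i)) ∘ₗ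
        DFinsupp.mapRange.linearMap f := by
  rw [LinearMap.comp_sub, LinearMap.sub_comp, mapRange_comp_shiftOfLE f hp hp' hf]
  rfl

theorem comp_sumOfLE {N : Submodule R M} {N' : Submodule R M'} (hN : ∀ i, p i ≤ N)
    (hN' : ∀ i, p' i ≤ N') (g : N →ₗ[R] N')
    (hg : ∀ i (v : p i), (g (Submodule.inclusion (hN i) v) : M') = f i v) :
    g ∘ₗ sumOfLE hN = sumOfLE hN' ∘ₗ DFinsupp.mapRange.linearMap f := by
  refine linearMap_ext R fun i => LinearMap.ext fun v => ?_
  simp only [LinearMap.comp_apply]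
  rw [sumOfLE_lof, mapRange_lof, sumOfLE_lof]
  exact Subtype.ext (hg i v)

end Naturality

end DirectSum

open DirectSum

lemma S13_le_pred (n : ℤ) (i : ℕ) {m : ℤ} (hm : m ≠ -n) :
    S13 n i m ≤ S13 n i (m - 1) := by
  unfold S13
  split_ifs <;> first | exact le_rfl | exact bot_le | omega

lemma T13_le_pred (n : ℤ) {m : ℤ} (hm : m ≠ -n) : T13 n m ≤ T13 n (m - 1) := by
  unfold T13
  split_ifs <;> first | exact le_rfl | exact bot_le | omega

lemma coe_yS (n : ℤ) (i : ℕ) (m : ℤ) (x : S13 n i m) :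
    (yS n i m x : ℂ) = if m = -n then 0 else (x : ℂ) := by
  split_ifs with hm
  · have hbot : S13 n i (m - 1) = ⊥ := by unfold S13; rw [if_neg]; omega
    exact (Submodule.eq_bot_iff _).1 hbot _ (yS n i m x).2
  · rw [yS, dif_pos (S13_le_pred n i hm)]
    rfl

lemma coe_yT (n m : ℤ) (x : T13 n m) :
    (yT n m x : ℂ) = if m = -n then 0 else (x : ℂ) := by
  split_ifs with hm
  · have hbot : T13 n (m - 1) = ⊥ := by unfold T13; rw [if_neg]; omega
    exact (Submodule.eq_bot_iff _).1 hbot _ (yT n m x).2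
  · rw [yT, dif_pos (T13_le_pred n hm)]
    rfl

lemma mem_S13_of_mem_T13 {n m : ℤ} {v : ℂ} (hv : v ∈ T13 n m) :
    v ∈ S13 n (n + m).toNat m := by
  unfold T13 S13 at *
  split_ifs at hv ⊢ <;> first | trivial | exact hv | omega

/-- in the derived category of dg modules over `S = ℂ[y]` (`y` of degree
`-1`, zero differential), the homotopy colimit `E_n` of
`X_0(n) →y X_1(n-1) →y X_2(n-2) → ⋯`, `X_i = ℂ[y]/(y^{i+1})`, is isomorphic to
`ℂ[y⁻¹](n)`: the defining map `1 - (shift)` on `⊕_ℕ X_i(n-i)` is a degreewise injective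
morphism of dg modules whose cokernel is `ℂ[y⁻¹](n)`, i.e. there is a short exact sequence
`0 → ⊕ X_i(n-i) → ⊕ X_i(n-i) → ℂ[y⁻¹](n) → 0` of dg `S`-modules (all differentials being
zero, a dg morphism is a degreewise linear map commuting with the `y`-actions), so that
the cone `E_n` is quasi-isomorphic to `ℂ[y⁻¹](n)`. -/
theorem stmt_13 (n : ℤ) :
    (∀ m : ℤ, yProd n m ∘ₗ oneMinusShift n m = oneMinusShift n (m - 1) ∘ₗ yProd n m) ∧
    (∀ m : ℤ, Function.Injective (oneMinusShift n m)) ∧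
    ∃ q : ∀ m : ℤ, Prod13 n m →ₗ[ℂ] ↥(T13 n m),
      (∀ m : ℤ, yT n m ∘ₗ q m = q (m - 1) ∘ₗ yProd n m) ∧
      (∀ m : ℤ, Function.Surjective (q m)) ∧
      (∀ m : ℤ, LinearMap.range (oneMinusShift n m) = LinearMap.ker (q m)) := by
  refine ⟨fun m => ?_, fun m => injective_id_sub_shiftOfLE (S13_mono n · m),
    fun m => sumOfLE (S13_le_T13 n · m), fun m => ?_,
    fun m => sumOfLE_surjective _ fun _ hv => ⟨_, mem_S13_of_mem_T13 hv⟩,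
    fun m => range_id_sub_shiftOfLE _ _⟩
  · refine mapRange_comp_id_sub_shiftOfLE _ (S13_mono n · m) (S13_mono n · (m - 1)) fun i v => ?_
    simp only [coe_yS, Submodule.coe_inclusion]
  · refine comp_sumOfLE _ _ _ _ fun i v => ?_
    simp only [coe_yS, coe_yT, Submodule.coe_inclusion]
end
end

section
/- Every triangulation of the completed ∞-gon containing a left fountain at a vertex n contains the infinite (wrapping) arc (−∞, n). -/
/-!
A triangulation contains every arc that crosses none of its arcs, so it suffices to see that
nothing in `T` crosses `(-∞, n)`. An arc crossing `(-∞, n)` is some `(c, d)` with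
`-∞ < c < n < d`; since the fountain's left endpoints `bᵢ` decrease without bound in `ℤ`, some
`bᵢ < c`, and then the fountain arc `(bᵢ, n) ∈ T` crosses `(c, d)`.
-/

noncomputable section

/-- An arc of the completed ∞-gon: a pair `(a,b)` with `a < b`, where the endpoints lie in
`ℤ ∪ {-∞}` (modelled as `WithBot ℤ`, with `⊥ = -∞`) and the second endpoint is an integer. -/
def Arc : Type := {p : WithBot ℤ × ℤ // p.1 < (p.2 : WithBot ℤ)}

/-- Two arcs `(a,b)` and `(c,d)` cross if `a < c < b < d` or `c < a < d < b`. -/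
def Arc.Crosses (α β : Arc) : Prop :=
  (α.1.1 < β.1.1 ∧ β.1.1 < (α.1.2 : WithBot ℤ) ∧ α.1.2 < β.1.2) ∨
  (β.1.1 < α.1.1 ∧ α.1.1 < (β.1.2 : WithBot ℤ) ∧ β.1.2 < α.1.2)

/-- A triangulation of the completed ∞-gon: a maximal set of pairwise non-crossing arcs. -/
def IsTriangulation (T : Set Arc) : Prop :=
  (∀ α ∈ T, ∀ β ∈ T, ¬ α.Crosses β) ∧
  (∀ γ : Arc, (∀ α ∈ T, ¬ γ.Crosses α) → γ ∈ T)

/-- `T` has a left fountain at `n`: it contains arcs `(bᵢ, n)` for a strictly decreasing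
sequence of integers `bᵢ`. -/
def HasLeftFountain (T : Set Arc) (n : ℤ) : Prop :=
  ∃ b : ℕ → ℤ, StrictAnti b ∧ ∀ i : ℕ, ∃ α ∈ T, α.1 = (((b i : ℤ) : WithBot ℤ), n)

def Arc.wrapping (n : ℤ) : Arc := ⟨(⊥, n), WithBot.bot_lt_coe n⟩

theorem Arc.wrapping_crosses_iff {n : ℤ} {α : Arc} :
    (Arc.wrapping n).Crosses α ↔ ⊥ < α.1.1 ∧ α.1.1 < n ∧ n < α.1.2 := by
  simp [Arc.Crosses, Arc.wrapping]

theorem StrictAnti.exists_lt {ι β : Type*} [Preorder ι] [Nonempty ι] [NoMaxOrder ι] [LinearOrder β]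
    [PredOrder β] [IsPredArchimedean β] {f : ι → β} (hf : StrictAnti f) (c : β) :
    ∃ i, f i < c := by
  obtain ⟨_, ⟨i, rfl⟩, hi⟩ := not_bddBelow_iff.mp hf.not_bddBelow_range_of_isPredArchimedean c
  exact ⟨i, hi⟩

theorem HasLeftFountain.exists_crosses {T : Set Arc} {n : ℤ} (h : HasLeftFountain T n)
    {α : Arc} (h₁ : ⊥ < α.1.1) (h₂ : α.1.1 < n) (h₃ : n < α.1.2) :
    ∃ β ∈ T, β.Crosses α := by
  obtain ⟨b, hb, hbT⟩ := h
  obtain ⟨c, hc⟩ := WithBot.ne_bot_iff_exists.mp h₁.ne'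
  obtain ⟨i, hi⟩ := hb.exists_lt c
  obtain ⟨β, hβT, hβ⟩ := hbT i
  refine ⟨β, hβT, Or.inl ⟨?_, by rwa [hβ], by rwa [hβ]⟩⟩
  rw [hβ, ← hc]
  exact WithBot.coe_lt_coe.mpr hi

/-- every triangulation of the completed ∞-gon containing a left fountain at
`n` contains the wrapping arc `(-∞, n)`. -/
theorem stmt_14 (T : Set Arc) (hT : IsTriangulation T) (n : ℤ)
    (h : HasLeftFountain T n) :
    ∃ α ∈ T, α.1 = ((⊥ : WithBot ℤ), n) := by
  refine ⟨Arc.wrapping n, hT.2 _ fun α hα hcross => ?_, rfl⟩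
  obtain ⟨h₁, h₂, h₃⟩ := Arc.wrapping_crosses_iff.mp hcross
  obtain ⟨β, hβT, hβα⟩ := h.exists_crosses h₁ h₂ h₃
  exact hT.1 β hβT α hα hβα
end
end

section
/- Let T be a triangulation of the completed ∞-gon containing the infinite arc (−∞, n). Then either T has a left fountain at n, or there exists an integer m < n with (−∞, m) ∈ T. -/
/-!
Assume no infinite arc `(-∞, m)` with `m < n` lies in `T`. If the left endpoints of the arcs
`(b, n)` of `T` are unbounded below they form a left fountain. Otherwise pick `m < n` below all of
them. The arc `(-∞, m)` is not in `T`, so finite arcs `(c, d)` of `T` cross it, and since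
`(-∞, n) ∈ T` and no `(c, n)` with `c < m` is in `T`, all their right ends satisfy `d < n`.
For the largest such right end `D`, the arc `(-∞, D)` crosses no arc of `T`, hence lies in `T`.
-/

noncomputable section

theorem exists_strictAnti_of_not_bddBelow {α : Type*} [LinearOrder α] [Nonempty α] {s : Set α}
    (hs : ¬ BddBelow s) : ∃ b : ℕ → α, StrictAnti b ∧ ∀ i, b i ∈ s := by
  have hlt : ∀ x, ∃ y ∈ s, y < x := by
    simpa [BddBelow, Set.Nonempty, mem_lowerBounds] using hs
  obtain ⟨y, hy, -⟩ := hlt (Classical.arbitrary α)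
  have : Nonempty s := ⟨⟨y, hy⟩⟩
  have : NoMinOrder s := ⟨fun x ↦ let ⟨y, hy, hyx⟩ := hlt x; ⟨⟨y, hy⟩, hyx⟩⟩
  obtain ⟨f, hf⟩ := Nat.exists_strictAnti s
  exact ⟨fun i ↦ f i, hf, fun i ↦ (f i).2⟩

def HasArc (T : Set Arc) (a : WithBot ℤ) (b : ℤ) : Prop := ∃ α ∈ T, α.1 = (a, b)

def crossingRightEnds (T : Set Arc) (m : ℤ) : Set ℤ :=
  {d | ∃ c : ℤ, c < m ∧ m < d ∧ HasArc T c d}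

namespace IsTriangulation

variable {T : Set Arc}

theorem not_hasArc_crossing (hT : IsTriangulation T) {a c : WithBot ℤ} {b d : ℤ}
    (hab : HasArc T a b) (hcd : HasArc T c d) (hac : a < c) (hcb : c < b) (hbd : b < d) :
    False := by
  obtain ⟨α, hαT, hα⟩ := hab
  obtain ⟨β, hβT, hβ⟩ := hcd
  exact hT.1 α hαT β hβT (Or.inl (by simp only [hα, hβ]; exact ⟨hac, hcb, hbd⟩))

theorem hasArc_bot_iff (hT : IsTriangulation T) {m : ℤ} :
    HasArc T ⊥ m ↔ ∀ c d : ℤ, c < m → m < d → ¬ HasArc T c d := by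
  refine ⟨fun hm c d hcm hmd hcd ↦
    hT.not_hasArc_crossing hm hcd (WithBot.bot_lt_coe c) (WithBot.coe_lt_coe.2 hcm) hmd,
    fun h ↦ ⟨⟨(⊥, m), WithBot.bot_lt_coe m⟩, hT.2 _ fun β hβT hcr ↦ ?_, rfl⟩⟩
  rcases hcr with ⟨hbot, hcm, hmd⟩ | ⟨hbot, -⟩
  · obtain ⟨c, hc⟩ := WithBot.ne_bot_iff_exists.1 hbot.ne'
    refine h c β.1.2 (WithBot.coe_lt_coe.1 (hc ▸ hcm)) hmd ⟨β, hβT, ?_⟩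
    rw [hc]
  · exact not_lt_bot hbot

theorem hasArc_bot_of_isGreatest (hT : IsTriangulation T) {m D : ℤ}
    (hD : IsGreatest (crossingRightEnds T m) D) : HasArc T ⊥ D := by
  obtain ⟨⟨c, hcm, hmD, hcD⟩, hmax⟩ := hD
  refine hT.hasArc_bot_iff.2 fun c' d' hc'D hDd' hc'd' ↦ ?_
  rcases lt_or_ge c' m with hc'm | hmc'
  · exact absurd (hmax ⟨c', hc'm, hmD.trans hDd', hc'd'⟩) hDd'.not_ge
  · exact hT.not_hasArc_crossing hcD hc'd' (WithBot.coe_lt_coe.2 (hcm.trans_le hmc'))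
      (WithBot.coe_lt_coe.2 hc'D) hDd'

theorem crossingRightEnds_lt (hT : IsTriangulation T) {m n : ℤ} (hn : HasArc T ⊥ n)
    (hmn : m < n) (hm : m ∈ lowerBounds {b : ℤ | HasArc T b n}) :
    ∀ d ∈ crossingRightEnds T m, d < n := by
  rintro d ⟨c, hcm, -, hcd⟩
  rcases lt_trichotomy d n with hdn | rfl | hnd
  · exact hdn
  · exact absurd (hm hcd) hcm.not_ge
  · exact (hT.not_hasArc_crossing hn hcd (WithBot.bot_lt_coe c)
      (WithBot.coe_lt_coe.2 (hcm.trans hmn)) hnd).elim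

end IsTriangulation

/-- if a triangulation `T` of the completed ∞-gon contains the infinite arc
`(-∞, n)`, then either `T` has a left fountain at `n`, or there exists an integer `m < n`
with `(-∞, m) ∈ T`. -/
theorem stmt_15 (T : Set Arc) (hT : IsTriangulation T) (n : ℤ)
    (h : ∃ α ∈ T, α.1 = ((⊥ : WithBot ℤ), n)) :
    HasLeftFountain T n ∨ ∃ m : ℤ, m < n ∧ ∃ α ∈ T, α.1 = ((⊥ : WithBot ℤ), m) := by
  by_cases hbdd : BddBelow {b : ℤ | HasArc T b n}
  swap
  · exact Or.inl (exists_strictAnti_of_not_bddBelow hbdd)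
  right
  obtain ⟨ℓ, hℓ⟩ := hbdd
  set m := min ℓ (n - 1)
  have hmn : m < n := (min_le_right _ _).trans_lt (by omega)
  have hm : m ∈ lowerBounds {b : ℤ | HasArc T b n} := fun b hb ↦ (min_le_left _ _).trans (hℓ hb)
  by_cases hmT : HasArc T ⊥ m
  · exact ⟨m, hmn, hmT⟩
  have hne : (crossingRightEnds T m).Nonempty := by
    obtain ⟨c, d, hcm, hmd, hcd⟩ : ∃ c d : ℤ, c < m ∧ m < d ∧ HasArc T c d := by
      simpa [hT.hasArc_bot_iff] using hmT
    exact ⟨d, c, hcm, hmd, hcd⟩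
  have hlt := hT.crossingRightEnds_lt h hmn hm
  have hbdd : BddAbove (crossingRightEnds T m) := ⟨n, fun d hd ↦ (hlt d hd).le⟩
  have hD : IsGreatest (crossingRightEnds T m) (sSup (crossingRightEnds T m)) :=
    ⟨Int.csSup_mem hne hbdd, fun _ hd ↦ le_csSup hbdd hd⟩
  exact ⟨_, hlt _ hD.1, hT.hasArc_bot_of_isGreatest hD⟩
end
end

section
/- Let C be a Frobenius category whose stable category is C̄, with projection functor π : C → C̄, and let T be a full subcategory of C containing all projective-injective objects such that every object of C admits a projective precover. If M ∈ C is such that π(M) admits a π(T)-precover in C̄, then M admits a T-precover in C. -/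
open CategoryTheory CategoryTheory.Limits

/-! Proof idea: if `f : T₀ ⟶ M` is a precover up to maps factoring through `P` and
`p : P_M ⟶ M` is a `P`-precover, then `[f p] : T₀ ⊞ P_M ⟶ M` is a `T`-precover. Indeed, for
`g : T' ⟶ M` write `g = h ≫ f + u ≫ v` with `v` out of an object of `P`; then `v` lifts along `p`,
so `g` lifts along `[f p]`. -/

namespace CategoryTheory

variable {C : Type*} [Category C]

def IsPrecover (T : Set C) {T₀ M : C} (f : T₀ ⟶ M) : Prop :=
  ∀ T' ∈ T, ∀ g : T' ⟶ M, ∃ h : T' ⟶ T₀, h ≫ f = g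

def FactorsThroughObjIn (P : Set C) {X Y : C} (g : X ⟶ Y) : Prop :=
  ∃ (Q : C) (_ : Q ∈ P) (u : X ⟶ Q) (v : Q ⟶ Y), g = u ≫ v

theorem FactorsThroughObjIn.exists_eq_comp {P : Set C} {X Y PY : C} {g : X ⟶ Y}
    (hg : FactorsThroughObjIn P g) {p : PY ⟶ Y} (hp : IsPrecover P p) :
    ∃ k : X ⟶ PY, g = k ≫ p := by
  obtain ⟨Q, hQ, u, v, rfl⟩ := hg
  obtain ⟨k, rfl⟩ := hp Q hQ v
  exact ⟨u ≫ k, (Category.assoc _ _ _).symm⟩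

variable [Preadditive C]

/-- A precover in the stable category `C/P`, expressed in `C`. -/
def IsStablePrecover (P T : Set C) {T₀ M : C} (f : T₀ ⟶ M) : Prop :=
  ∀ T' ∈ T, ∀ g : T' ⟶ M, ∃ h : T' ⟶ T₀, FactorsThroughObjIn P (g - h ≫ f)

theorem IsStablePrecover.isPrecover_biprod_desc {P T : Set C} {T₀ PM M : C}
    [HasBinaryBiproduct T₀ PM] {f : T₀ ⟶ M} (hf : IsStablePrecover P T f) {p : PM ⟶ M}
    (hp : IsPrecover P p) : IsPrecover T (biprod.desc f p) := by
  intro T' hT' g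
  obtain ⟨h, hgh⟩ := hf T' hT' g
  obtain ⟨k, hk⟩ := hgh.exists_eq_comp hp
  refine ⟨biprod.lift h k, ?_⟩
  rw [biprod.lift_desc, ← hk, add_sub_cancel]

end CategoryTheory

/-- Let `C` be a Frobenius category (here: an additive category `C` together
with a class `P` of objects, the projective-injectives, such that every object admits a
projective precover), and let `T` be a full additive subcategory containing all
projective-injective objects.  If `M ∈ C` is such that its image `π(M)` in the stable
category `C̄ = C/P` admits a `π(T)`-precover — i.e. there are `T₀ ∈ T` and `f : T₀ ⟶ M`
such that every map `T' ⟶ M` from `T' ∈ T` factors through `f` up to a map factoring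
through an object of `P` — then `M` admits a genuine `T`-precover in `C`. -/
theorem stmt_18 {C : Type*} [Category C] [Preadditive C] [HasBinaryBiproducts C]
    (P T : Set C) (hPT : P ⊆ T)
    (hTadd : ∀ X ∈ T, ∀ Y ∈ T, (X ⊞ Y) ∈ T)
    (hproj : ∀ M : C, ∃ (PM : C) (_ : PM ∈ P) (p : PM ⟶ M),
      ∀ Q ∈ P, ∀ g : Q ⟶ M, ∃ h : Q ⟶ PM, h ≫ p = g)
    (M : C)
    (hstable : ∃ (T₀ : C) (_ : T₀ ∈ T) (f : T₀ ⟶ M),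
      ∀ T' ∈ T, ∀ g : T' ⟶ M, ∃ (h : T' ⟶ T₀) (Q : C) (_ : Q ∈ P)
        (u : T' ⟶ Q) (v : Q ⟶ M), g - h ≫ f = u ≫ v) :
    ∃ (T₁ : C) (_ : T₁ ∈ T) (f' : T₁ ⟶ M),
      ∀ T' ∈ T, ∀ g : T' ⟶ M, ∃ h : T' ⟶ T₁, h ≫ f' = g := by
  obtain ⟨T₀, hT₀, f, hf⟩ := hstable
  obtain ⟨PM, hPM, p, hp⟩ := hproj M
  exact ⟨T₀ ⊞ PM, hTadd _ hT₀ _ (hPT hPM), biprod.desc f p,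
    IsStablePrecover.isPrecover_biprod_desc (P := P) hf hp⟩
end
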